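/- Let 𝒪 be the ring of integers of ℚ(√−11) and X = (1+√−11)/2, so that 2 = −1 + X − X². If z ∈ 𝒪 can be written as Σ_{j=0}^n α_j X^j with α_j ∈ {−1,0,1}, then z + 1 can be written as Σ_{j=0}^{n+2} β_j X^j with β_j ∈ {−1,0,1}. -/

import Mathlib

open Polynomial

/-- The ring of integers `𝒪 = ℤ[(1+√-11)/2]` of `ℚ(√-11)`, presented as
`ℤ[x]/(x² - x + 3)`, the minimal polynomial of `X = (1+√-11)/2`. -/
noncomputable abbrev OQRootNeg11 : Type :=
  AdjoinRoot ((X : Polynomial ℤ) ^ 2 - X + 3)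

/-- The generator `X = (1+√-11)/2` of `𝒪`, satisfying `1 + 1 = -1 + X - X²`. -/
noncomputable abbrev XNeg11 : OQRootNeg11 :=
  AdjoinRoot.root ((X : Polynomial ℤ) ^ 2 - X + 3)

/-! Adding `a + b x` to a `{-1,0,1}`-digit expansion in `x`, where `x² - x + 3 = 0`, is done
digit by digit as in positional arithmetic, with the relation `2 = -1 + x - x²` as the carry
rule. The carry `a + b x` always has digits `a, b` that are not both nonzero of the same sign:
then the current digit plus `a` lies in `[-2, 2]`, and at `±2` the carry rule absorbs `b` into
a new carry of the same kind. A carry can thus only lengthen the expansion by two digits. -/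

def IsBalancedDigit (d : ℤ) : Prop := d = -1 ∨ d = 0 ∨ d = 1

theorem Finset.sum_range_succ_mul_pow_eq {R : Type*} [CommSemiring R] (c : ℕ → R) (x : R)
    (m : ℕ) :
    ∑ j ∈ range (m + 1), c j * x ^ j = c 0 + x * ∑ j ∈ range m, c (j + 1) * x ^ j := by
  rw [sum_range_succ', mul_sum, add_comm]
  simp only [pow_zero, mul_one, pow_succ', mul_left_comm]

section CarryRule

variable {R : Type*} [CommRing R] {x : R}

theorem exists_carry_step (hx : x ^ 2 - x + 3 = 0) {d a b : ℤ} (hd : IsBalancedDigit d)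
    (ha : IsBalancedDigit a) (hb : IsBalancedDigit b) (hab : a * b ≤ 0) :
    ∃ r a' b' : ℤ, IsBalancedDigit r ∧ IsBalancedDigit a' ∧ IsBalancedDigit b' ∧ a' * b' ≤ 0 ∧
      (d : R) + (a + b * x) = r + x * (a' + b' * x) := by
  unfold IsBalancedDigit at *
  by_cases h2 : d + a = 2
  · have hb' : b ≤ 0 := by rcases ha with rfl | rfl | rfl <;> omega
    have h2R : (d : R) + a = 2 := by simpa using congrArg (Int.cast : ℤ → R) h2
    refine ⟨-1, b + 1, -1, by omega, by omega, by omega, by omega, ?_⟩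
    push_cast
    linear_combination h2R + hx
  by_cases hm2 : d + a = -2
  · have hb' : 0 ≤ b := by rcases ha with rfl | rfl | rfl <;> omega
    have hm2R : (d : R) + a = -2 := by simpa using congrArg (Int.cast : ℤ → R) hm2
    refine ⟨1, b - 1, 1, by omega, by omega, by omega, by omega, ?_⟩
    push_cast
    linear_combination hm2R - hx
  · refine ⟨d + a, b, 0, by omega, hb, by omega, by simp, ?_⟩
    push_cast
    ring

theorem exists_digits_add_carry (hx : x ^ 2 - x + 3 = 0) (n : ℕ) (α : ℕ → ℤ)
    (hα : ∀ j, IsBalancedDigit (α j)) (a b : ℤ) (ha : IsBalancedDigit a)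
    (hb : IsBalancedDigit b) (hab : a * b ≤ 0) :
    ∃ β : ℕ → ℤ, (∀ j, IsBalancedDigit (β j)) ∧
      ∑ j ∈ Finset.range n, (α j : R) * x ^ j + (a + b * x) =
        ∑ j ∈ Finset.range (n + 2), (β j : R) * x ^ j := by
  induction n generalizing α a b with
  | zero =>
    refine ⟨fun | 0 => a | 1 => b | _ + 2 => 0,
      fun | 0 => ha | 1 => hb | _ + 2 => Or.inr (Or.inl rfl), ?_⟩
    simp [Finset.sum_range_succ]
  | succ n ih =>
    obtain ⟨r, a', b', hr, ha', hb', hab', hcarry⟩ := exists_carry_step hx (hα 0) ha hb hab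
    obtain ⟨β, hβ, hsum⟩ := ih (fun j => α (j + 1)) (fun j => hα (j + 1)) a' b' ha' hb' hab'
    refine ⟨fun | 0 => r | j + 1 => β j, fun | 0 => hr | j + 1 => hβ j, ?_⟩
    rw [Finset.sum_range_succ_mul_pow_eq, Finset.sum_range_succ_mul_pow_eq, ← hsum]
    linear_combination hcarry

end CarryRule

theorem xNeg11_sq_sub_add_three : XNeg11 ^ 2 - XNeg11 + 3 = 0 := by
  have h := AdjoinRoot.eval₂_root ((X : Polynomial ℤ) ^ 2 - X + 3)
  simp only [eval₂_add, eval₂_sub, eval₂_pow, eval₂_X, eval₂_ofNat] at h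
  exact h

/-- If `z ∈ 𝒪` is a `{-1,0,1}`-digit polynomial of degree `≤ n` in
`X = (1+√-11)/2`, then `z + 1` is such a polynomial of degree `≤ n + 2`. -/
theorem add_one_degree_le_add_two (n : ℕ) (α : ℕ → ℤ)
    (hα : ∀ j, α j = -1 ∨ α j = 0 ∨ α j = 1) (z : OQRootNeg11)
    (hz : z = ∑ j ∈ Finset.range (n + 1), (α j : OQRootNeg11) * XNeg11 ^ j) :
    ∃ β : ℕ → ℤ, (∀ j, β j = -1 ∨ β j = 0 ∨ β j = 1) ∧
      z + 1 = ∑ j ∈ Finset.range (n + 3), (β j : OQRootNeg11) * XNeg11 ^ j := by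
  obtain ⟨β, hβ, hsum⟩ := exists_digits_add_carry xNeg11_sq_sub_add_three (n + 1) α hα 1 0
    (Or.inr (Or.inr rfl)) (Or.inr (Or.inl rfl)) le_rfl
  refine ⟨β, hβ, ?_⟩
  simpa [hz] using hsum
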